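/- The sets J⁺(q₀) ∩ J⁻(q₁) are compact for all q₀, q₁ in the Heisenberg group (global hyperbolicity of the causal structure). -/
import Mathlib


/-- Heisenberg group law. -/
noncomputable def hmul (a b : ℝ × ℝ × ℝ) : ℝ × ℝ × ℝ :=
  (a.1 + b.1, a.2.1 + b.2.1, a.2.2 + b.2.2 + (a.1 * b.2.1 - b.1 * a.2.1) / 2)

/-- The causal future of the identity. -/
def JplusZero : Set (ℝ × ℝ × ℝ) :=
  {p | -p.1 ^ 2 + p.2.1 ^ 2 + 4 * |p.2.2| ≤ 0 ∧ 0 ≤ p.1}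

/-- The causal past of the identity. -/
def JminusZero : Set (ℝ × ℝ × ℝ) :=
  {p | -p.1 ^ 2 + p.2.1 ^ 2 + 4 * |p.2.2| ≤ 0 ∧ p.1 ≤ 0}

/-- Inverse in the Heisenberg group. -/
noncomputable def hneg (q : ℝ × ℝ × ℝ) : ℝ × ℝ × ℝ := (-q.1, -q.2.1, -q.2.2)

lemma hmul_image_eq (q : ℝ × ℝ × ℝ) (S : Set (ℝ × ℝ × ℝ)) :
    hmul q '' S = hmul (hneg q) ⁻¹' S := by
  ext p
  constructor
  · rintro ⟨r, hr, rfl⟩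
    have h : hmul (hneg q) (hmul q r) = r := by
      obtain ⟨r1, r2, r3⟩ := r
      simp only [hmul, hneg, Prod.mk.injEq]
      refine ⟨by ring, by ring, by ring⟩
    simpa [Set.mem_preimage, h] using hr
  · intro hp
    refine ⟨hmul (hneg q) p, hp, ?_⟩
    obtain ⟨p1, p2, p3⟩ := p
    simp only [hmul, hneg, Prod.mk.injEq]
    refine ⟨by ring, by ring, by ring⟩

lemma continuous_hmul (q : ℝ × ℝ × ℝ) : Continuous (hmul q) := by
  unfold hmul
  fun_prop

lemma isClosed_JplusZero : IsClosed JplusZero := by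
  have : JplusZero = {p : ℝ × ℝ × ℝ | -p.1 ^ 2 + p.2.1 ^ 2 + 4 * |p.2.2| ≤ 0}
      ∩ {p : ℝ × ℝ × ℝ | 0 ≤ p.1} := rfl
  rw [this]
  exact (isClosed_le (by fun_prop) continuous_const).inter
    (isClosed_le continuous_const continuous_fst)

lemma isClosed_JminusZero : IsClosed JminusZero := by
  have : JminusZero = {p : ℝ × ℝ × ℝ | -p.1 ^ 2 + p.2.1 ^ 2 + 4 * |p.2.2| ≤ 0}
      ∩ {p : ℝ × ℝ × ℝ | p.1 ≤ 0} := rfl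
  rw [this]
  exact (isClosed_le (by fun_prop) continuous_const).inter
    (isClosed_le continuous_fst continuous_const)

theorem causal_diamond_compact (q₀ q₁ : ℝ × ℝ × ℝ) :
    IsCompact ((hmul q₀ '' JplusZero) ∩ (hmul q₁ '' JminusZero)) := by
  obtain ⟨a₀, b₀, c₀⟩ := q₀
  obtain ⟨a₁, b₁, c₁⟩ := q₁
  rw [hmul_image_eq, hmul_image_eq]
  obtain ⟨D, hD⟩ : ∃ D : ℝ, D = |a₀| + |a₁| := ⟨_, rfl⟩
  obtain ⟨Cy, hCy⟩ : ∃ Cy : ℝ, Cy = |b₀| + D := ⟨_, rfl⟩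
  obtain ⟨Cz, hCz⟩ : ∃ Cz : ℝ, Cz = D ^ 2 / 4 + |c₀| + (|b₀| * D + |a₀| * Cy) / 2 := ⟨_, rfl⟩
  have hclosed : IsClosed (hmul (hneg (a₀, b₀, c₀)) ⁻¹' JplusZero ∩
      hmul (hneg (a₁, b₁, c₁)) ⁻¹' JminusZero) :=
    ((isClosed_JplusZero.preimage (continuous_hmul _)).inter
      (isClosed_JminusZero.preimage (continuous_hmul _)))
  refine IsCompact.of_isClosed_subset
    (isCompact_Icc (a := ((-D, -Cy, -Cz) : ℝ × ℝ × ℝ)) (b := (D, Cy, Cz))) hclosed ?_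
  rintro ⟨x, y, z⟩ ⟨hp0, hp1⟩
  simp only [Set.mem_preimage, hmul, hneg, JplusZero, JminusZero, Set.mem_setOf_eq] at hp0 hp1
  obtain ⟨h0, hx0⟩ := hp0
  obtain ⟨h1, hx1⟩ := hp1
  have habs0 := abs_nonneg (-c₀ + z + (-a₀ * y - x * -b₀) / 2)
  have habs1 := abs_nonneg (-c₁ + z + (-a₁ * y - x * -b₁) / 2)
  have ha₀ := le_abs_self a₀
  have ha₀' := neg_abs_le a₀
  have ha₁ := le_abs_self a₁
  have ha₁' := neg_abs_le a₁
  have hb₀ := le_abs_self b₀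
  have hb₀' := neg_abs_le b₀
  have hc₀ := le_abs_self c₀
  have hc₀' := neg_abs_le c₀
  -- x bounds
  have hxD : |x| ≤ D := by
    rw [abs_le]; constructor <;> [linarith [hD]; linarith [hD]]
  have hxD1 := abs_le.mp hxD
  -- (y - b₀)^2 ≤ (x - a₀)^2 ≤ D^2
  have hxa : 0 ≤ -a₀ + x := hx0
  have hxaD : -a₀ + x ≤ D := by linarith [hD]
  have hxsq : (-a₀ + x) ^ 2 ≤ D ^ 2 := by nlinarith
  have hysq : (-b₀ + y) ^ 2 ≤ D ^ 2 := by linarith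
  have hD0 : 0 ≤ D := by rw [hD]; positivity
  have hyb' := abs_le_of_sq_le_sq' hysq hD0
  have hyabs : |y| ≤ Cy := by
    rw [abs_le]; constructor <;> [linarith [hyb'.1, hCy]; linarith [hyb'.2, hCy]]
  have hyb := abs_le.mp hyabs
  -- z₀ bound
  have hz0 : |(-c₀ + z + (-a₀ * y - x * -b₀) / 2)| ≤ D ^ 2 / 4 := by
    nlinarith [sq_nonneg (-b₀ + y)]
  have hz0' := abs_le.mp hz0
  -- bound the cross terms
  have hby : |b₀ * x| ≤ |b₀| * D := by
    rw [abs_mul]; exact mul_le_mul_of_nonneg_left hxD (abs_nonneg b₀)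
  have hay : |a₀ * y| ≤ |a₀| * Cy := by
    rw [abs_mul]; exact mul_le_mul_of_nonneg_left hyabs (abs_nonneg a₀)
  have hby' := abs_le.mp hby
  have hay' := abs_le.mp hay
  simp only [Set.mem_Icc, Prod.le_def]
  refine ⟨⟨hxD1.1, hyb.1, ?_⟩, hxD1.2, hyb.2, ?_⟩
  · linarith [hz0'.1, hz0'.2, hay'.1, hay'.2, hby'.1, hby'.2, hCz]
  · linarith [hz0'.1, hz0'.2, hay'.1, hay'.2, hby'.1, hby'.2, hCz]
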